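/- Let μ be the standard Gaussian measure on ℝⁿ and T = I + u a C¹ diffeomorphism with T_*μ ≪ μ and density L ∈ L¹(μ). Then L(x) = |Λ(T^{-1}(x))|^{-1} for μ-a.e. x, where Λ(x) = det(I + ∇u(x))·exp(−⟨u(x), x⟩ − |u(x)|²/2). -/

import Mathlib

open MeasureTheory ProbabilityTheory Finset

lemma lintegral_fin_nat_prod_eq_prod' {n : ℕ} {E : Fin n → Type*}
    [∀ i, MeasureSpace (E i)] [∀ i, SigmaFinite (volume : Measure (E i))]
    (f : (i : Fin n) → E i → ENNReal) (hf : ∀ i, Measurable (f i)) :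
    ∫⁻ x : (i : Fin n) → E i, ∏ i, f i (x i) = ∏ i, ∫⁻ x, f i x := by
  induction n with
  | zero => simp [volume_pi]
  | succ n n_ih =>
      calc
        _ = ∫⁻ x : E 0 × ((i : Fin n) → E (Fin.succ i)),
            f 0 x.1 * ∏ i : Fin n, f (Fin.succ i) (x.2 i) := by
          rw [volume_pi, ← ((measurePreserving_piFinSuccAbove
            (fun i => (volume : Measure (E i))) 0).symm).lintegral_comp_emb
            (MeasurableEquiv.measurableEmbedding _)]
          simp_rw [MeasurableEquiv.piFinSuccAbove_symm_apply, Fin.insertNthEquiv,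
            Fin.prod_univ_succ, Fin.insertNth_zero, Equiv.coe_fn_mk, Fin.cons_succ,
            Measure.volume_eq_prod, volume_pi, Fin.zero_succAbove, Fin.cons_zero]
          rfl
        _ = (∫⁻ x, f 0 x) * ∫⁻ x : (i : Fin n) → E (Fin.succ i), ∏ i, f (Fin.succ i) (x i) := by
          rw [Measure.volume_eq_prod]
          exact lintegral_prod_mul (hf 0).aemeasurable
            (Measurable.aemeasurable (Finset.measurable_prod _ fun i _ =>
              (hf _).comp (measurable_pi_apply i)))
        _ = ∏ i, ∫⁻ x, f i x := by
          rw [n_ih _ fun i => hf _, Fin.prod_univ_succ]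

lemma pi_withDensity' {n : ℕ} (f : ℝ → ENNReal) (hf : Measurable f) (hftop : ∀ x, f x ≠ ⊤) :
    Measure.pi (fun _ : Fin n => (volume : Measure ℝ).withDensity f) =
      (volume : Measure (Fin n → ℝ)).withDensity fun x => ∏ i, f (x i) := by
  haveI : SigmaFinite ((volume : Measure ℝ).withDensity f) :=
    SigmaFinite.withDensity_of_ne_top (ae_of_all _ hftop)
  refine Measure.pi_eq fun s hs => ?_
  rw [withDensity_apply _ (MeasurableSet.univ_pi hs), ← lintegral_indicator (MeasurableSet.univ_pi hs) _]
  have : (Set.univ.pi s).indicator (fun x : Fin n → ℝ => ∏ i, f (x i)) =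
      fun x => ∏ i, (s i).indicator f (x i) := by
    funext x
    by_cases hx : x ∈ Set.univ.pi s
    · rw [Set.indicator_of_mem hx]
      exact Finset.prod_congr rfl fun i _ =>
        (Set.indicator_of_mem (hx i (Set.mem_univ i)) f).symm
    · rw [Set.indicator_of_notMem hx]
      rw [Set.mem_univ_pi] at hx
      push_neg at hx
      obtain ⟨i, hi⟩ := hx
      exact (Finset.prod_eq_zero (Finset.mem_univ i) (Set.indicator_of_notMem hi f)).symm
  rw [this, lintegral_fin_nat_prod_eq_prod' (E := fun _ : Fin n => ℝ) _ fun i => hf.indicator (hs i)]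
  exact Finset.prod_congr rfl fun i _ => by
    rw [lintegral_indicator (hs i) _, withDensity_apply _ (hs i)]

theorem stmt_8 (n : ℕ)
    (μ : Measure (Fin n → ℝ)) (hμ : μ = Measure.pi fun _ => gaussianReal 0 1)
    (T S : (Fin n → ℝ) → (Fin n → ℝ)) (hT : ContDiff ℝ 1 T)
    (hST : Function.LeftInverse S T) (hTS : Function.RightInverse S T)
    (L : (Fin n → ℝ) → ℝ) (hLmeas : Measurable L) (hL0 : ∀ᵐ x ∂μ, 0 ≤ L x)
    (hmap : Measure.map T μ = μ.withDensity fun x => ENNReal.ofReal (L x))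
    (Λ : (Fin n → ℝ) → ℝ)
    (hΛ : ∀ x, Λ x = LinearMap.det (fderiv ℝ T x : (Fin n → ℝ) →ₗ[ℝ] (Fin n → ℝ)) *
        Real.exp (-(∑ i, (T x i - x i) * x i) - (∑ i, (T x i - x i) ^ 2) / 2)) :
    ∀ᵐ x ∂μ, L x = |Λ (S x)|⁻¹ := by
  classical
  set ν := (volume : Measure (Fin n → ℝ)) with hν
  set φ : ℝ → ℝ := gaussianPDFReal 0 1 with hφ
  set Φ : (Fin n → ℝ) → ENNReal := fun x => ENNReal.ofReal (∏ i, φ (x i)) with hΦ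
  have hφpos : ∀ t, 0 < φ t := fun t => gaussianPDFReal_pos 0 1 t one_ne_zero
  have hφmeas : Measurable φ := measurable_gaussianPDFReal 0 1
  have hΦmeas : Measurable Φ :=
    (Finset.measurable_prod _ fun i _ => hφmeas.comp (measurable_pi_apply i)).ennreal_ofReal
  have hΦpos : ∀ x, Φ x ≠ 0 := by
    intro x
    simp only [hΦ, ne_eq, ENNReal.ofReal_eq_zero, not_le]
    exact Finset.prod_pos fun i _ => hφpos (x i)
  -- μ as a density w.r.t. Lebesgue
  have hμν : μ = ν.withDensity Φ := by
    rw [hμ]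
    have h1 : (gaussianReal 0 1) = (volume : Measure ℝ).withDensity (gaussianPDF 0 1) :=
      gaussianReal_of_var_ne_zero 0 one_ne_zero
    simp_rw [h1]
    rw [pi_withDensity' _ (measurable_gaussianPDF 0 1) (fun x => ENNReal.ofReal_ne_top)]
    congr 1
    funext x
    simp only [hΦ]
    rw [ENNReal.ofReal_prod_of_nonneg fun i _ => (hφpos (x i)).le]
    exact Finset.prod_congr rfl fun i _ => rfl
  -- basic facts about T and S
  have hTmeas : Measurable T := hT.continuous.measurable
  have hTinj : Function.Injective T := hST.injective
  have hTemb : MeasurableEmbedding T := hTmeas.measurableEmbedding hTinj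
  have hSmeas : Measurable S := by
    intro A hA
    have : S ⁻¹' A = T '' A := by
      ext y
      constructor
      · intro hy
        exact ⟨S y, hy, hTS y⟩
      · rintro ⟨x, hx, rfl⟩
        rwa [Set.mem_preimage, hST x]
    rw [this]
    exact hTemb.measurableSet_image' hA
  have hTd : ∀ x, HasFDerivAt T (fderiv ℝ T x) x := fun x =>
    (hT.differentiable one_ne_zero x).hasFDerivAt
  have hdetcont : Continuous fun x => (fderiv ℝ T x).det :=
    ContinuousLinearMap.continuous_det.comp (hT.continuous_fderiv one_ne_zero)
  -- the critical set
  set Z : Set (Fin n → ℝ) := {x | (fderiv ℝ T x).det = 0} with hZ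
  have hZmeas : MeasurableSet Z := hdetcont.measurable (measurableSet_singleton 0)
  have hνZ : ν Z = 0 := by
    have hTZ : ν (T '' Z) = 0 :=
      addHaar_image_eq_zero_of_det_fderivWithin_eq_zero ν
        (fun x _ => (hTd x).hasFDerivWithinAt) (fun x hx => hx)
    have hμTZ : μ (T '' Z) = 0 := by
      rw [hμν]; exact withDensity_absolutelyContinuous ν Φ hTZ
    have hμZ : μ Z = 0 := by
      have h1 : Measure.map T μ (T '' Z) = μ Z := by
        rw [Measure.map_apply hTmeas (hTemb.measurableSet_image' hZmeas),
          Set.preimage_image_eq Z hTinj]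
      have h2 : Measure.map T μ (T '' Z) = 0 := by
        rw [hmap]
        exact withDensity_absolutelyContinuous μ _ hμTZ
      rw [← h1, h2]
    rw [hμν, withDensity_apply _ hZmeas] at hμZ
    have h3 : Φ =ᵐ[ν.restrict Z] 0 := (lintegral_eq_zero_iff hΦmeas).mp hμZ
    have h4 := Filter.Eventually.and h3 h3
    have h5 : (ν.restrict Z) Set.univ = 0 :=
      measure_mono_null (fun y _ => by simp [hΦpos y]) (ae_iff.mp h3)
    rwa [Measure.restrict_apply_univ] at h5
  -- the key pointwise identity off Z
  have hΛval : ∀ x, |Λ x| = |(fderiv ℝ T x).det| *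
      Real.exp (-(∑ i, (T x i - x i) * x i) - (∑ i, (T x i - x i) ^ 2) / 2) := by
    intro x
    rw [hΛ x, abs_mul, abs_of_pos (Real.exp_pos _)]
  have hprod : ∀ x : Fin n → ℝ, (∏ i, φ (T x i)) = (∏ i, φ (x i)) *
      Real.exp (-(∑ i, (T x i - x i) * x i) - (∑ i, (T x i - x i) ^ 2) / 2) := by
    intro x
    have hφeq : ∀ t : ℝ, φ t = (Real.sqrt (2 * Real.pi))⁻¹ * Real.exp (-(t ^ 2) / 2) := by
      intro t
      simp [hφ, gaussianPDFReal]
    calc ∏ i, φ (T x i)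
        = ∏ i, (φ (x i) * Real.exp (-((T x i - x i) * x i) - (T x i - x i) ^ 2 / 2)) := by
          refine Finset.prod_congr rfl fun i _ => ?_
          rw [hφeq, hφeq, mul_assoc, ← Real.exp_add]
          congr 2
          ring
      _ = (∏ i, φ (x i)) * ∏ i, Real.exp (-((T x i - x i) * x i) - (T x i - x i) ^ 2 / 2) :=
          Finset.prod_mul_distrib
      _ = _ := by
          rw [← Real.exp_sum]
          congr 1
          rw [Finset.sum_sub_distrib, ← Finset.sum_neg_distrib, ← Finset.sum_div]
  have hkey : ∀ x ∉ Z, ENNReal.ofReal |(fderiv ℝ T x).det| *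
      (Φ (T x) * ENNReal.ofReal |Λ x|⁻¹) = Φ x := by
    intro x hx
    have hd : (fderiv ℝ T x).det ≠ 0 := hx
    have hEx : (0:ℝ) < Real.exp (-(∑ i, (T x i - x i) * x i) -
        (∑ i, (T x i - x i) ^ 2) / 2) := Real.exp_pos _
    have hP : (0:ℝ) ≤ ∏ i, φ (x i) := Finset.prod_nonneg fun i _ => (hφpos (x i)).le
    simp only [hΦ]
    rw [hprod x, ← ENNReal.ofReal_mul (by positivity), ← ENNReal.ofReal_mul (abs_nonneg _)]
    congr 1
    rw [hΛval x, mul_inv]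
    have hdabs : |(fderiv ℝ T x).det| ≠ 0 := abs_ne_zero.mpr hd
    field_simp
  -- identification of the image measure
  set G : (Fin n → ℝ) → ENNReal := fun y => ENNReal.ofReal |Λ (S y)|⁻¹ with hG
  have hΛmeas : Measurable Λ := by
    have : Λ = fun x => LinearMap.det (fderiv ℝ T x : (Fin n → ℝ) →ₗ[ℝ] (Fin n → ℝ)) *
        Real.exp (-(∑ i, (T x i - x i) * x i) - (∑ i, (T x i - x i) ^ 2) / 2) := funext hΛ
    rw [this]
    have h2 : Continuous fun x => Real.exp (-(∑ i, (T x i - x i) * x i) -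
        (∑ i, (T x i - x i) ^ 2) / 2) := by
      apply Real.continuous_exp.comp
      apply Continuous.sub
      · exact (continuous_finset_sum _ fun i _ => (((continuous_apply i).comp hT.continuous).sub
          (continuous_apply i)).mul (continuous_apply i)).neg
      · exact (continuous_finset_sum _ fun i _ => (((continuous_apply i).comp hT.continuous).sub
          (continuous_apply i)).pow 2).div_const 2
    exact (hdetcont.mul h2).measurable
  have hGmeas : Measurable G :=
    (((hΛmeas.comp hSmeas).abs.inv).ennreal_ofReal)
  have haeZ : ∀ᵐ x ∂ν, x ∉ Z := by
    rw [ae_iff]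
    simpa using hνZ
  have himg : Measure.map T μ = μ.withDensity G := by
    ext A hA
    rw [Measure.map_apply hTmeas hA, withDensity_apply _ hA]
    have hA' : MeasurableSet (T ⁻¹' A) := hTmeas hA
    have himage : T '' (T ⁻¹' A) = A := Set.image_preimage_eq A hTS.surjective
    rw [hμν, withDensity_apply _ hA']
    rw [setLIntegral_withDensity_eq_setLIntegral_mul ν hΦmeas hGmeas hA]
    calc ∫⁻ x in T ⁻¹' A, Φ x ∂ν
        = ∫⁻ x in T ⁻¹' A, ENNReal.ofReal |(fderiv ℝ T x).det| * (Φ * G) (T x) ∂ν := by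
          refine lintegral_congr_ae (ae_restrict_of_ae ?_)
          filter_upwards [haeZ] with x hxZ
          have h := hkey x hxZ
          simp only [Pi.mul_apply, hG, hST x] at *
          rw [h]
      _ = ∫⁻ y in T '' (T ⁻¹' A), (Φ * G) y ∂ν :=
          (lintegral_image_eq_lintegral_abs_det_fderiv_mul ν hA'
            (fun x _ => (hTd x).hasFDerivWithinAt) hTinj.injOn _).symm
      _ = ∫⁻ y in A, (Φ * G) y ∂ν := by rw [himage]
  -- conclude
  have hfin : ∫⁻ x, ENNReal.ofReal (L x) ∂μ ≠ ⊤ := by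
    have h1 : (μ.withDensity fun x => ENNReal.ofReal (L x)) Set.univ = μ Set.univ := by
      rw [← hmap, Measure.map_apply hTmeas MeasurableSet.univ, Set.preimage_univ]
    rw [← setLIntegral_univ, ← withDensity_apply _ MeasurableSet.univ, h1]
    haveI : IsProbabilityMeasure μ := by
      rw [hμ]; infer_instance
    simp
  have hae : (fun x => ENNReal.ofReal (L x)) =ᵐ[μ] G := by
    rw [← withDensity_eq_iff hLmeas.ennreal_ofReal.aemeasurable hGmeas.aemeasurable hfin]
    rw [← hmap, himg]
  filter_upwards [hae, hL0] with x hx hx0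
  have := (ENNReal.ofReal_eq_ofReal_iff hx0 (inv_nonneg.mpr (abs_nonneg _))).mp hx
  exact this
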